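/- Let k ≥ 1 and define A ∈ R^{[4,2k]} by a_{iiii} = 1 for all i, a_{2i−1,2i−1,2i−1,2i} = −2 for i = 1,...,k, all other entries zero, and b = (0,1,0,1,...,0,1)^T. Then the nonnegative solutions of A x^3 = b are exactly the 2^k vectors x with (x_{2i−1}, x_{2i}) ∈ {(0,1),(2,1)} for each i; the minimal nonnegative solution is (0,1,...,0,1) and the maximal one is (2,1,...,2,1). -/

import Mathlib

/-!
The equations decouple into the blocks `(x i, x (i + 1))`, `i` even (0-based). At an odd index
the equation is `x (i + 1) ^ 3 = 1`, forcing `x (i + 1) = 1`; at the even index of the block it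
then reads `x i ^ 2 * (x i - 2) = 0`. Hence every block is `(0, 1)` or `(2, 1)`, and the two
uniform choices bound all solutions coordinatewise.
-/

open Finset Filter

noncomputable section

/-- Action of an order-(p+1) tensor (p trailing indices):
`(A x^{p})_i = ∑ a_{i i₂ … i_{p+1}} x_{i₂} ⋯ x_{i_{p+1}}`. -/
def tapp (p n : ℕ) (A : Fin n → (Fin p → Fin n) → ℝ) (x : Fin n → ℝ) : Fin n → ℝ :=
  fun i => ∑ js : Fin p → Fin n, A i js * ∏ j, x (js j)

/-- A `Z`-tensor: all off-diagonal entries are nonpositive. -/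
def IsZTensor (p n : ℕ) (A : Fin n → (Fin p → Fin n) → ℝ) : Prop :=
  ∀ i js, (∃ j, js j ≠ i) → A i js ≤ 0

/-- The identity tensor. -/
def identT (p n : ℕ) : Fin n → (Fin p → Fin n) → ℝ :=
  fun i js => if ∀ j, js j = i then 1 else 0

/-- Spectral radius of a tensor: sup of moduli of (real) eigenvalues. -/
def tensorSpecRad (p n : ℕ) (B : Fin n → (Fin p → Fin n) → ℝ) : ℝ :=
  sSup {r : ℝ | ∃ lam : ℝ, ∃ x : Fin n → ℝ, x ≠ 0 ∧
    (∀ i, tapp p n B x i = lam * x i ^ p) ∧ r = |lam|}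

/-- A nonsingular M-tensor: `A = s I − B` with `B ≥ 0` and `s > ρ(B)`. -/
def IsMTensor (p n : ℕ) (A : Fin n → (Fin p → Fin n) → ℝ) : Prop :=
  ∃ s : ℝ, ∃ B : Fin n → (Fin p → Fin n) → ℝ,
    (∀ i js, 0 ≤ B i js) ∧ tensorSpecRad p n B < s ∧
    ∀ i js, A i js = s * identT p n i js - B i js

/-- The diagonal-part tensor of `A`. -/
def diagT (p n : ℕ) (A : Fin n → (Fin p → Fin n) → ℝ) : Fin n → (Fin p → Fin n) → ℝ :=
  fun i js => if ∀ j, js j = i then A i (fun _ => i) else 0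

/-- The majorization matrix of `A`: `M_{ij} = a_{i j … j}`. -/
def majMatrix (p n : ℕ) (A : Fin n → (Fin p → Fin n) → ℝ) : Matrix (Fin n) (Fin n) ℝ :=
  fun i j => A i (fun _ => j)

/-- The "mixed index" part `N = M_tensor − A`: zero on constant trailing tuples,
`−A` elsewhere. -/
def NPart (p n : ℕ) (A : Fin n → (Fin p → Fin n) → ℝ) : Fin n → (Fin p → Fin n) → ℝ :=
  fun i js => if ∀ j' j'', js j' = js j'' then 0 else -A i js

/-- A nonsingular M-matrix: a Z-matrix with `M y > 0` for some `y > 0`. -/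
def IsMMatrix (n : ℕ) (P : Matrix (Fin n) (Fin n) ℝ) : Prop :=
  (∀ i j, i ≠ j → P i j ≤ 0) ∧ ∃ y : Fin n → ℝ, (∀ i, 0 < y i) ∧ ∀ i, 0 < P.mulVec y i

/-- Spectral radius of a real matrix (via its complex spectrum). -/
def matSpecRad (n : ℕ) (J : Matrix (Fin n) (Fin n) ℝ) : ℝ :=
  sSup {r : ℝ | ∃ μ ∈ spectrum ℂ (J.map (Complex.ofReal ·)), r = ‖μ‖}

/-- Irreducibility of a matrix. -/
def MatIrreducible (n : ℕ) (J : Matrix (Fin n) (Fin n) ℝ) : Prop :=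
  ∀ S : Finset (Fin n), S.Nonempty → S ≠ Finset.univ → ∃ i ∈ S, ∃ j, j ∉ S ∧ J i j ≠ 0

/-- The tensor of Example 1.1 (0-indexed): `a_{iiii} = 1`, and for each even `i`
(paper index `2i-1`) the entry with trailing indices `(i, i, i+1)` equals `-2`. -/
def A8 (k : ℕ) : Fin (2*k) → (Fin 3 → Fin (2*k)) → ℝ := fun i js =>
  (if ∀ j, js j = i then (1 : ℝ) else 0) +
  (if i.val % 2 = 0 ∧ js 0 = i ∧ js 1 = i ∧ (js 2).val = i.val + 1 then (-2 : ℝ) else 0)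

lemma Fin.val_add_one_lt_of_even {k : ℕ} (i : Fin (2 * k)) (hi : i.val % 2 = 0) :
    i.val + 1 < 2 * k := by
  omega

lemma tapp_identT_apply (p n : ℕ) (x : Fin n → ℝ) (i : Fin n) :
    tapp p n (identT p n) x i = x i ^ p := by
  rw [tapp, Finset.sum_eq_single (fun _ => i)]
  · simp [identT]
  · intro js _ hjs
    rw [identT, if_neg (fun h => hjs (funext h)), zero_mul]
  · simp

section A8

variable {k : ℕ} (x : Fin (2 * k) → ℝ)

lemma tapp_A8_apply (i : Fin (2 * k)) :
    tapp 3 (2 * k) (A8 k) x i = x i ^ 3 +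
      ∑ js : Fin 3 → Fin (2 * k),
        (if i.val % 2 = 0 ∧ js 0 = i ∧ js 1 = i ∧ (js 2).val = i.val + 1 then (-2 : ℝ) else 0) *
          ∏ j, x (js j) := by
  rw [← tapp_identT_apply 3 (2 * k) x i]
  simp only [tapp, A8, identT, add_mul, Finset.sum_add_distrib]

lemma tapp_A8_apply_of_odd (i : Fin (2 * k)) (hi : i.val % 2 = 1) :
    tapp 3 (2 * k) (A8 k) x i = x i ^ 3 := by
  rw [tapp_A8_apply, Finset.sum_eq_zero, add_zero]
  intro js _
  rw [if_neg (by omega), zero_mul]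

lemma tapp_A8_apply_of_even (i : Fin (2 * k)) (hi : i.val % 2 = 0) :
    tapp 3 (2 * k) (A8 k) x i =
      x i ^ 3 - 2 * x i ^ 2 * x ⟨i.val + 1, i.val_add_one_lt_of_even hi⟩ := by
  set c : Fin 3 → Fin (2 * k) := ![i, i, ⟨i.val + 1, i.val_add_one_lt_of_even hi⟩]
  rw [tapp_A8_apply, Finset.sum_eq_single c]
  · rw [if_pos ⟨hi, rfl, rfl, rfl⟩, Fin.prod_univ_three]
    simp only [c, Matrix.cons_val_zero, Matrix.cons_val_one, Matrix.cons_val]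
    ring
  · rintro js - hjs
    rw [if_neg, zero_mul]
    rintro ⟨-, h0, h1, h2⟩
    exact hjs (funext fun j => by fin_cases j <;> simp [c, h0, h1, Fin.ext_iff, h2])
  · simp

theorem tapp_A8_eq_iff :
    tapp 3 (2 * k) (A8 k) x = (fun i => if i.val % 2 = 0 then 0 else 1) ↔
      ∀ i : Fin (2 * k), (i.val % 2 = 1 → x i = 1) ∧ (i.val % 2 = 0 → x i = 0 ∨ x i = 2) := by
  rw [funext_iff]
  constructor
  · intro h
    have hodd (i : Fin (2 * k)) (hi : i.val % 2 = 1) : x i = 1 := by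
      have hcube := h i
      rw [tapp_A8_apply_of_odd x i hi, if_neg (by omega)] at hcube
      exact (Odd.pow_inj (by decide)).1 (hcube.trans (one_pow 3).symm)
    refine fun i => ⟨hodd i, fun hi => ?_⟩
    have hcube := h i
    have hnext := hodd ⟨i.val + 1, i.val_add_one_lt_of_even hi⟩ (by simp only; omega)
    rw [tapp_A8_apply_of_even x i hi, if_pos hi, hnext] at hcube
    have hfac : x i ^ 2 * (x i - 2) = 0 := by linear_combination hcube
    rcases mul_eq_zero.1 hfac with h0 | h2
    · exact Or.inl (pow_eq_zero_iff two_ne_zero |>.1 h0)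
    · exact Or.inr (sub_eq_zero.1 h2)
  · intro h i
    by_cases hi : i.val % 2 = 0
    · have hnext := (h ⟨i.val + 1, i.val_add_one_lt_of_even hi⟩).1 (by simp only; omega)
      rw [tapp_A8_apply_of_even x i hi, if_pos hi, hnext]
      rcases (h i).2 hi with hxi | hxi <;> rw [hxi] <;> norm_num
    · rw [tapp_A8_apply_of_odd x i (by omega), if_neg hi, (h i).1 (by omega), one_pow]

theorem mem_Icc_of_tapp_A8_eq
    (hx : tapp 3 (2 * k) (A8 k) x = (fun i => if i.val % 2 = 0 then 0 else 1)) :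
    x ∈ Set.Icc (fun i => if i.val % 2 = 0 then 0 else 1)
      (fun i => if i.val % 2 = 0 then 2 else 1) := by
  have hsol := (tapp_A8_eq_iff x).1 hx
  refine ⟨fun i => ?_, fun i => ?_⟩ <;> by_cases hi : i.val % 2 = 0 <;>
    simp only [hi, if_true, if_false]
  · rcases (hsol i).2 hi with hxi | hxi <;> norm_num [hxi]
  · rw [(hsol i).1 (by omega)]
  · rcases (hsol i).2 hi with hxi | hxi <;> norm_num [hxi]
  · rw [(hsol i).1 (by omega)]

end A8

theorem stmt8_general (k : ℕ) :
    (∀ x : Fin (2*k) → ℝ, 0 ≤ x →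
      (tapp 3 (2*k) (A8 k) x = (fun i => if i.val % 2 = 0 then 0 else 1) ↔
        ∀ i : Fin (2*k), (i.val % 2 = 1 → x i = 1) ∧
          (i.val % 2 = 0 → x i = 0 ∨ x i = 2))) ∧
    (0 ≤ (fun i => if i.val % 2 = 0 then (0:ℝ) else 1 : Fin (2*k) → ℝ) ∧
      tapp 3 (2*k) (A8 k) (fun i => if i.val % 2 = 0 then 0 else 1) =
        (fun i => if i.val % 2 = 0 then 0 else 1) ∧
      ∀ y : Fin (2*k) → ℝ, 0 ≤ y →
        tapp 3 (2*k) (A8 k) y = (fun i => if i.val % 2 = 0 then 0 else 1) →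
        (fun i => if i.val % 2 = 0 then (0:ℝ) else 1 : Fin (2*k) → ℝ) ≤ y) ∧
    (0 ≤ (fun i => if i.val % 2 = 0 then (2:ℝ) else 1 : Fin (2*k) → ℝ) ∧
      tapp 3 (2*k) (A8 k) (fun i => if i.val % 2 = 0 then 2 else 1) =
        (fun i => if i.val % 2 = 0 then 0 else 1) ∧
      ∀ y : Fin (2*k) → ℝ, 0 ≤ y →
        tapp 3 (2*k) (A8 k) y = (fun i => if i.val % 2 = 0 then 0 else 1) →
        y ≤ (fun i => if i.val % 2 = 0 then (2:ℝ) else 1 : Fin (2*k) → ℝ)) := by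
  have hsol0 := (tapp_A8_eq_iff (k := k) (fun i => if i.val % 2 = 0 then 0 else 1)).2
    fun i => ⟨fun hi => if_neg (by omega), fun hi => .inl (if_pos hi)⟩
  have hsol2 := (tapp_A8_eq_iff (k := k) (fun i => if i.val % 2 = 0 then 2 else 1)).2
    fun i => ⟨fun hi => if_neg (by omega), fun hi => .inr (if_pos hi)⟩
  refine ⟨fun x _ => tapp_A8_eq_iff x,
    ⟨fun i => ?_, hsol0, fun y _ hy => (mem_Icc_of_tapp_A8_eq y hy).1⟩,
    ⟨fun i => ?_, hsol2, fun y _ hy => (mem_Icc_of_tapp_A8_eq y hy).2⟩⟩ <;>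
  · dsimp only
    split_ifs <;> norm_num

/-- with `b = (0,1,…,0,1)`, the nonnegative solutions of `A8 x³ = b` are
exactly the `2^k` vectors with `(x_{2i-1}, x_{2i}) ∈ {(0,1),(2,1)}` for each pair;
`(0,1,…,0,1)` is the minimal and `(2,1,…,2,1)` the maximal nonnegative solution. -/
theorem stmt8 (k : ℕ) (hk : 1 ≤ k) :
    (∀ x : Fin (2*k) → ℝ, 0 ≤ x →
      (tapp 3 (2*k) (A8 k) x = (fun i => if i.val % 2 = 0 then 0 else 1) ↔
        ∀ i : Fin (2*k), (i.val % 2 = 1 → x i = 1) ∧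
          (i.val % 2 = 0 → x i = 0 ∨ x i = 2))) ∧
    (0 ≤ (fun i => if i.val % 2 = 0 then (0:ℝ) else 1 : Fin (2*k) → ℝ) ∧
      tapp 3 (2*k) (A8 k) (fun i => if i.val % 2 = 0 then 0 else 1) =
        (fun i => if i.val % 2 = 0 then 0 else 1) ∧
      ∀ y : Fin (2*k) → ℝ, 0 ≤ y →
        tapp 3 (2*k) (A8 k) y = (fun i => if i.val % 2 = 0 then 0 else 1) →
        (fun i => if i.val % 2 = 0 then (0:ℝ) else 1 : Fin (2*k) → ℝ) ≤ y) ∧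
    (0 ≤ (fun i => if i.val % 2 = 0 then (2:ℝ) else 1 : Fin (2*k) → ℝ) ∧
      tapp 3 (2*k) (A8 k) (fun i => if i.val % 2 = 0 then 2 else 1) =
        (fun i => if i.val % 2 = 0 then 0 else 1) ∧
      ∀ y : Fin (2*k) → ℝ, 0 ≤ y →
        tapp 3 (2*k) (A8 k) y = (fun i => if i.val % 2 = 0 then 0 else 1) →
        y ≤ (fun i => if i.val % 2 = 0 then (2:ℝ) else 1 : Fin (2*k) → ℝ)) :=
  stmt8_general k

end
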